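/- Let K₁ be a compact operator with limsup_{λ→0} λ^{2d} n(λ, K₁) ≤ C < ∞ and let K₂(ε) be compact operators with limsup_{λ→0} λ^{2d} n(λ, K₂(ε)) ≤ C·ε^d. Then limsup_{λ→0} λ^d n(λ, K₁K₂(ε)) → 0 as ε → 0. -/

import Mathlib

open Filter Topology ENNReal

variable {H : Type*} [NormedAddCommGroup H] [InnerProductSpace ℂ H] [CompleteSpace H]

/-- The `n`-th approximation number of a bounded operator `K`: the distance from
`K` to the operators of rank at most `n`.  For a compact operator this equals the
`(n+1)`-st singular value `s_{n+1}(K)`. -/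
noncomputable def approxNum (K : H →L[ℂ] H) (n : ℕ) : ℝ :=
  sInf {c : ℝ | ∃ F : H →L[ℂ] H, LinearMap.rank (F : H →ₗ[ℂ] H) ≤ (n : Cardinal) ∧ c = ‖K - F‖}

/-- The singular value counting function `n(λ, K)`: the number of singular values
of `K` exceeding `λ`. -/
noncomputable def svCount (K : H →L[ℂ] H) (lam : ℝ) : ℕ :=
  sInf {n : ℕ | approxNum K n ≤ lam}

namespace ProdCountAux

lemma approxSet_nonempty (K : H →L[ℂ] H) (n : ℕ) :
    {c : ℝ | ∃ F : H →L[ℂ] H,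
      LinearMap.rank (F : H →ₗ[ℂ] H) ≤ (n : Cardinal) ∧ c = ‖K - F‖}.Nonempty :=
  ⟨‖K‖, 0, by simp, by simp⟩

lemma approxSet_bddBelow (K : H →L[ℂ] H) (n : ℕ) :
    BddBelow {c : ℝ | ∃ F : H →L[ℂ] H,
      LinearMap.rank (F : H →ₗ[ℂ] H) ≤ (n : Cardinal) ∧ c = ‖K - F‖} :=
  ⟨0, by rintro c ⟨F, -, rfl⟩; exact norm_nonneg _⟩

lemma approxNum_nonneg (K : H →L[ℂ] H) (n : ℕ) : 0 ≤ approxNum K n :=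
  le_csInf (approxSet_nonempty K n) (by rintro c ⟨F, -, rfl⟩; exact norm_nonneg _)

lemma approxNum_le (K F : H →L[ℂ] H) (n : ℕ)
    (h : LinearMap.rank (F : H →ₗ[ℂ] H) ≤ (n : Cardinal)) : approxNum K n ≤ ‖K - F‖ :=
  csInf_le (approxSet_bddBelow K n) ⟨F, h, rfl⟩

lemma exists_approx_lt (K : H →L[ℂ] H) (n : ℕ) {δ : ℝ} (hδ : 0 < δ) :
    ∃ F : H →L[ℂ] H, LinearMap.rank (F : H →ₗ[ℂ] H) ≤ (n : Cardinal) ∧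
      ‖K - F‖ < approxNum K n + δ := by
  obtain ⟨c, hc, hlt⟩ := Real.lt_sInf_add_pos (approxSet_nonempty K n) hδ
  obtain ⟨F, hF, rfl⟩ := hc
  exact ⟨F, hF, hlt⟩

/-- Ky Fan type inequality for approximation numbers. -/
lemma approxNum_comp_le (A B : H →L[ℂ] H) (m n : ℕ) :
    approxNum (A ∘L B) (m + n) ≤ approxNum A m * approxNum B n := by
  have ham := approxNum_nonneg A m
  have hbn := approxNum_nonneg B n
  refine le_of_forall_pos_le_add fun η hη => ?_
  set am := approxNum A m
  set bn := approxNum B n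
  set δ : ℝ := min 1 (η / (am + bn + 2)) with hδdef
  have hδpos : 0 < δ := lt_min one_pos (by positivity)
  have hδ1 : δ ≤ 1 := min_le_left _ _
  have hδη : δ * (am + bn + 2) ≤ η := by
    have h2 : δ ≤ η / (am + bn + 2) := min_le_right _ _
    have hpos : (0:ℝ) < am + bn + 2 := by positivity
    calc δ * (am + bn + 2) ≤ (η / (am + bn + 2)) * (am + bn + 2) := by
          exact mul_le_mul_of_nonneg_right h2 hpos.le
      _ = η := div_mul_cancel₀ _ hpos.ne'
  obtain ⟨F, hF, hFn⟩ := exists_approx_lt A m hδpos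
  obtain ⟨G, hG, hGn⟩ := exists_approx_lt B n hδpos
  have hrank : LinearMap.rank (((F ∘L B + (A - F) ∘L G) : H →L[ℂ] H) : H →ₗ[ℂ] H)
      ≤ ((m + n : ℕ) : Cardinal) := by
    have h1 : LinearMap.rank (((F ∘L B) : H →L[ℂ] H) : H →ₗ[ℂ] H) ≤ (m : Cardinal) :=
      (LinearMap.rank_comp_le_left (B : H →ₗ[ℂ] H) (F : H →ₗ[ℂ] H)).trans hF
    have h2 : LinearMap.rank ((((A - F) ∘L G) : H →L[ℂ] H) : H →ₗ[ℂ] H) ≤ (n : Cardinal) :=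
      (LinearMap.rank_comp_le_right (G : H →ₗ[ℂ] H) ((A - F : H →L[ℂ] H) : H →ₗ[ℂ] H)).trans hG
    calc LinearMap.rank (((F ∘L B + (A - F) ∘L G) : H →L[ℂ] H) : H →ₗ[ℂ] H)
        ≤ LinearMap.rank (((F ∘L B) : H →L[ℂ] H) : H →ₗ[ℂ] H)
          + LinearMap.rank ((((A - F) ∘L G) : H →L[ℂ] H) : H →ₗ[ℂ] H) :=
          LinearMap.rank_add_le _ _
      _ ≤ (m : Cardinal) + (n : Cardinal) := add_le_add h1 h2
      _ = ((m + n : ℕ) : Cardinal) := by push_cast; ring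
  have hkey : approxNum (A ∘L B) (m + n) ≤ ‖A - F‖ * ‖B - G‖ := by
    have hco : A ∘L B - (F ∘L B + (A - F) ∘L G) = (A - F) ∘L (B - G) := by
      ext x; simp [ContinuousLinearMap.comp_apply, map_sub]; abel
    calc approxNum (A ∘L B) (m + n) ≤ ‖A ∘L B - (F ∘L B + (A - F) ∘L G)‖ :=
          approxNum_le _ _ _ hrank
      _ = ‖(A - F) ∘L (B - G)‖ := by rw [hco]
      _ ≤ ‖A - F‖ * ‖B - G‖ := ContinuousLinearMap.opNorm_comp_le _ _
  have hprod : ‖A - F‖ * ‖B - G‖ ≤ (am + δ) * (bn + δ) :=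
    mul_le_mul hFn.le hGn.le (norm_nonneg _) (by positivity)
  nlinarith [norm_nonneg (A - F), norm_nonneg (B - G)]

/-- Subadditivity of the counting function under composition. -/
lemma svCount_comp_le (A B : H →L[ℂ] H) {l₁ l₂ : ℝ}
    (hA : ∃ k, approxNum A k ≤ l₁) (hB : ∃ k, approxNum B k ≤ l₂)
    (hl₁ : 0 ≤ l₁) (hl₂ : 0 ≤ l₂) :
    svCount (A ∘L B) (l₁ * l₂) ≤ svCount A l₁ + svCount B l₂ := by
  have hm : approxNum A (svCount A l₁) ≤ l₁ := Nat.sInf_mem hA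
  have hn : approxNum B (svCount B l₂) ≤ l₂ := Nat.sInf_mem hB
  refine Nat.sInf_le ?_
  have := (approxNum_comp_le A B (svCount A l₁) (svCount B l₂)).trans
    (mul_le_mul hm hn (approxNum_nonneg B _) hl₁)
  exact this

/-- Compact operators can be approximated by finite rank operators in a Hilbert space. -/
lemma exists_approxNum_le (K : H →L[ℂ] H) (hK : IsCompactOperator K) {r : ℝ} (hr : 0 < r) :
    ∃ n : ℕ, approxNum K n ≤ r := by
  have hK' : IsCompactOperator ⇑(K : H →ₗ[ℂ] H) := hK
  have hcomp : IsCompact (closure ((K : H →ₗ[ℂ] H) '' Metric.ball 0 1)) :=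
    hK'.isCompact_closure_image_ball 1
  obtain ⟨t, -, htfin, hcover⟩ := hcomp.finite_cover_balls (by positivity : (0:ℝ) < r / 2)
  set Y : Submodule ℂ H := Submodule.span ℂ t with hY
  haveI : FiniteDimensional ℂ Y := FiniteDimensional.span_of_finite ℂ htfin
  set P : H →L[ℂ] H := Y.subtypeL.comp (Y.orthogonalProjectionOnto) with hP
  set F : H →L[ℂ] H := P ∘L K with hFdef
  have hrange : LinearMap.range (F : H →ₗ[ℂ] H) ≤ Y := by
    rintro x ⟨y, rfl⟩
    exact (Y.orthogonalProjectionOnto (K y)).2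
  have hrank : LinearMap.rank (F : H →ₗ[ℂ] H) < Cardinal.aleph0 :=
    lt_of_le_of_lt (Submodule.rank_mono hrange) (Module.rank_lt_aleph0 ℂ Y)
  obtain ⟨n, hn⟩ := Cardinal.lt_aleph0.1 hrank
  refine ⟨n, le_trans (approxNum_le K F n (le_of_eq hn)) ?_⟩
  have hx : ∀ x : H, ‖x‖ < 1 → ‖(K - F) x‖ ≤ r / 2 := by
    intro x hx
    have hKx : K x ∈ closure ((K : H →ₗ[ℂ] H) '' Metric.ball 0 1) :=
      subset_closure ⟨x, mem_ball_zero_iff.2 hx, rfl⟩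
    obtain ⟨y, hyt, hy⟩ := Set.mem_iUnion₂.1 (hcover hKx)
    have hyY : y ∈ Y := Submodule.subset_span hyt
    have hmin : ‖K x - (Y.orthogonalProjectionOnto (K x) : H)‖ ≤ ‖K x - y‖ := by
      rw [← Submodule.starProjection_apply, Submodule.starProjection_minimal]
      exact ciInf_le ⟨0, by rintro c ⟨z, rfl⟩; exact norm_nonneg _⟩ (⟨y, hyY⟩ : Y)
    have heq : ‖(K - F) x‖ = ‖K x - (Y.orthogonalProjectionOnto (K x) : H)‖ := by
      simp [hFdef, hP]
    rw [heq]
    refine hmin.trans ?_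
    rw [← dist_eq_norm]
    exact (Metric.mem_ball.1 hy).le
  refine ContinuousLinearMap.opNorm_le_of_shell (f := K - F) one_pos hr.le
    (c := (2 : ℂ)) (by norm_num) ?_
  intro x h1 h2
  have h2' : ‖(K - F) x‖ ≤ r / 2 := hx x h2
  have hxhalf : 1 / 2 ≤ ‖x‖ := by
    have : ‖(2:ℂ)‖ = 2 := by norm_num
    rw [this] at h1
    linarith
  nlinarith

lemma limsup_comp_le {g : ℝ → ℝ≥0∞} {m : ℝ → ℝ} {l : Filter ℝ} (hm : Tendsto m l l) :
    limsup (fun x => g (m x)) l ≤ limsup g l := by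
  rw [limsup_eq, limsup_eq]
  exact sInf_le_sInf fun a ha => hm.eventually ha

lemma limsup_le_add {f u v : ℝ → ℝ≥0∞} {l : Filter ℝ} {a b : ℝ≥0∞}
    (hf : ∀ᶠ x in l, f x ≤ u x + v x)
    (hu : limsup u l ≤ a) (hv : limsup v l ≤ b) (ha : a ≠ ⊤) (hb : b ≠ ⊤) :
    limsup f l ≤ a + b := by
  refine ENNReal.le_of_forall_pos_le_add fun η hη _ => ?_
  have hη2 : ((η : ℝ≥0∞) / 2) ≠ 0 := by
    simp [ENNReal.div_eq_zero_iff, hη.ne']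
  have h1 : ∀ᶠ x in l, u x < a + (η : ℝ≥0∞) / 2 :=
    eventually_lt_of_limsup_lt (hu.trans_lt (ENNReal.lt_add_right ha hη2))
  have h2 : ∀ᶠ x in l, v x < b + (η : ℝ≥0∞) / 2 :=
    eventually_lt_of_limsup_lt (hv.trans_lt (ENNReal.lt_add_right hb hη2))
  have hev : ∀ᶠ x in l, f x ≤ (a + (η : ℝ≥0∞) / 2) + (b + (η : ℝ≥0∞) / 2) := by
    filter_upwards [hf, h1, h2] with x hx h1x h2x
    exact hx.trans (add_le_add h1x.le h2x.le)
  have := limsup_le_of_le (by isBoundedDefault) hev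
  calc limsup f l ≤ (a + (η : ℝ≥0∞) / 2) + (b + (η : ℝ≥0∞) / 2) := this
    _ = a + b + (η : ℝ≥0∞) := by
        rw [add_add_add_comm, ENNReal.add_halves]

end ProdCountAux

open ProdCountAux in
/-- If `limsup λ^{2d} n(λ,K₁) ≤ C < ∞` and `limsup λ^{2d} n(λ,K₂(ε)) ≤ C ε^d`,
then `limsup λ^d n(λ, K₁ K₂(ε)) → 0` as `ε → 0⁺`. -/
theorem product_counting_smallness (d : ℝ) (hd : 0 < d)
    (K₁ : H →L[ℂ] H) (K₂ : ℝ → (H →L[ℂ] H))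
    (hK₁ : IsCompactOperator K₁) (hK₂ : ∀ ε > (0 : ℝ), IsCompactOperator (K₂ ε))
    (C : ℝ≥0∞) (hC : C ≠ ⊤)
    (h₁ : limsup (fun lam : ℝ => ENNReal.ofReal (lam ^ (2 * d)) * (svCount K₁ lam : ℝ≥0∞))
      (𝓝[>] (0 : ℝ)) ≤ C)
    (h₂ : ∀ ε > (0 : ℝ),
      limsup (fun lam : ℝ => ENNReal.ofReal (lam ^ (2 * d)) * (svCount (K₂ ε) lam : ℝ≥0∞))
        (𝓝[>] (0 : ℝ)) ≤ C * ENNReal.ofReal (ε ^ d)) :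
    Tendsto (fun ε : ℝ =>
        limsup (fun lam : ℝ => ENNReal.ofReal (lam ^ d) * (svCount (K₁ ∘L K₂ ε) lam : ℝ≥0∞))
          (𝓝[>] (0 : ℝ)))
      (𝓝[>] (0 : ℝ)) (𝓝 0) := by
  set l : Filter ℝ := 𝓝[>] (0 : ℝ) with hl
  -- the key bound for a fixed ε > 0
  have key : ∀ ε : ℝ, 0 < ε →
      limsup (fun lam : ℝ => ENNReal.ofReal (lam ^ d) * (svCount (K₁ ∘L K₂ ε) lam : ℝ≥0∞)) l
        ≤ ENNReal.ofReal (ε ^ (d / 2)) * C + C * ENNReal.ofReal (ε ^ (d / 2)) := by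
    intro ε hε
    set e : ℝ := ε ^ ((1:ℝ)/4) with he_def
    have he : 0 < e := Real.rpow_pos_of_pos hε _
    set m₁ : ℝ → ℝ := fun μ => Real.sqrt μ / e with hm₁def
    set m₂ : ℝ → ℝ := fun μ => e * Real.sqrt μ with hm₂def
    set g₁ : ℝ → ℝ≥0∞ :=
      fun lam => ENNReal.ofReal (lam ^ (2 * d)) * (svCount K₁ lam : ℝ≥0∞) with hg₁def
    set g₂ : ℝ → ℝ≥0∞ :=
      fun lam => ENNReal.ofReal (lam ^ (2 * d)) * (svCount (K₂ ε) lam : ℝ≥0∞) with hg₂def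
    have he2 : e ^ (2 * d) = ε ^ (d / 2) := by
      rw [he_def, ← Real.rpow_mul hε.le]
      congr 1; ring
    have hsq : ∀ μ : ℝ, 0 < μ → (Real.sqrt μ) ^ (2 * d) = μ ^ d := by
      intro μ hμ
      rw [Real.rpow_mul (Real.sqrt_nonneg μ)]
      congr 1
      rw [show (2:ℝ) = ((2:ℕ) : ℝ) by norm_num, Real.rpow_natCast, Real.sq_sqrt hμ.le]
    -- tendsto facts
    have hm₁t : Tendsto m₁ l l := by
      rw [hl, tendsto_nhdsWithin_iff]
      constructor
      · have h0 : Tendsto (fun μ : ℝ => Real.sqrt μ) (𝓝[>] (0:ℝ)) (𝓝 0) := by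
          have := (Real.continuous_sqrt.tendsto 0).mono_left
            (nhdsWithin_le_nhds (s := Set.Ioi (0:ℝ)))
          simpa using this
        simpa using h0.div_const e
      · filter_upwards [self_mem_nhdsWithin] with μ hμ
        exact div_pos (Real.sqrt_pos.2 hμ) he
    have hm₂t : Tendsto m₂ l l := by
      rw [hl, tendsto_nhdsWithin_iff]
      constructor
      · have h0 : Tendsto (fun μ : ℝ => Real.sqrt μ) (𝓝[>] (0:ℝ)) (𝓝 0) := by
          have := (Real.continuous_sqrt.tendsto 0).mono_left
            (nhdsWithin_le_nhds (s := Set.Ioi (0:ℝ)))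
          simpa using this
        simpa using h0.const_mul e
      · filter_upwards [self_mem_nhdsWithin] with μ hμ
        exact mul_pos he (Real.sqrt_pos.2 hμ)
    -- pointwise bound
    have hpt : ∀ᶠ μ in l, ENNReal.ofReal (μ ^ d) * (svCount (K₁ ∘L K₂ ε) μ : ℝ≥0∞)
        ≤ ENNReal.ofReal (ε ^ (d / 2)) * g₁ (m₁ μ)
          + ENNReal.ofReal (ε ^ (-(d / 2))) * g₂ (m₂ μ) := by
      rw [hl]
      filter_upwards [self_mem_nhdsWithin] with μ (hμ : 0 < μ)
      have hsμ : 0 < Real.sqrt μ := Real.sqrt_pos.2 hμ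
      have hm₁p : 0 < m₁ μ := div_pos hsμ he
      have hm₂p : 0 < m₂ μ := mul_pos he hsμ
      have hmul : m₁ μ * m₂ μ = μ := by
        rw [hm₁def, hm₂def]
        field_simp
        rw [Real.sq_sqrt hμ.le]
      have hcount : svCount (K₁ ∘L K₂ ε) μ ≤ svCount K₁ (m₁ μ) + svCount (K₂ ε) (m₂ μ) := by
        have h := svCount_comp_le K₁ (K₂ ε)
          (exists_approxNum_le K₁ hK₁ hm₁p) (exists_approxNum_le (K₂ ε) (hK₂ ε hε) hm₂p)
          hm₁p.le hm₂p.le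
        rwa [hmul] at h
      have arith₁ : ε ^ (d / 2) * (m₁ μ) ^ (2 * d) = μ ^ d := by
        rw [hm₁def]
        rw [Real.div_rpow (Real.sqrt_nonneg μ) he.le, hsq μ hμ, he2]
        rw [mul_comm, div_mul_cancel₀]
        exact (Real.rpow_pos_of_pos hε _).ne'
      have arith₂ : ε ^ (-(d / 2)) * (m₂ μ) ^ (2 * d) = μ ^ d := by
        rw [hm₂def]
        rw [Real.mul_rpow he.le (Real.sqrt_nonneg μ), hsq μ hμ, he2, ← mul_assoc,
          ← Real.rpow_add hε]
        norm_num
      have e₁ : ENNReal.ofReal (μ ^ d) * (svCount K₁ (m₁ μ) : ℝ≥0∞)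
          = ENNReal.ofReal (ε ^ (d / 2)) * g₁ (m₁ μ) := by
        rw [hg₁def, ← arith₁,
          ENNReal.ofReal_mul (Real.rpow_nonneg hε.le _), mul_assoc]
      have e₂ : ENNReal.ofReal (μ ^ d) * (svCount (K₂ ε) (m₂ μ) : ℝ≥0∞)
          = ENNReal.ofReal (ε ^ (-(d / 2))) * g₂ (m₂ μ) := by
        rw [hg₂def, ← arith₂,
          ENNReal.ofReal_mul (Real.rpow_nonneg hε.le _), mul_assoc]
      calc ENNReal.ofReal (μ ^ d) * (svCount (K₁ ∘L K₂ ε) μ : ℝ≥0∞)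
          ≤ ENNReal.ofReal (μ ^ d)
            * ((svCount K₁ (m₁ μ) + svCount (K₂ ε) (m₂ μ) : ℕ) : ℝ≥0∞) :=
            mul_le_mul_right (Nat.cast_le.2 hcount) _
        _ = ENNReal.ofReal (μ ^ d) * (svCount K₁ (m₁ μ) : ℝ≥0∞)
            + ENNReal.ofReal (μ ^ d) * (svCount (K₂ ε) (m₂ μ) : ℝ≥0∞) := by
            push_cast; ring
        _ = ENNReal.ofReal (ε ^ (d / 2)) * g₁ (m₁ μ)
            + ENNReal.ofReal (ε ^ (-(d / 2))) * g₂ (m₂ μ) := by rw [e₁, e₂]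
    -- limsup bounds for the two pieces
    have hu : limsup (fun μ => ENNReal.ofReal (ε ^ (d / 2)) * g₁ (m₁ μ)) l
        ≤ ENNReal.ofReal (ε ^ (d / 2)) * C := by
      rw [ENNReal.limsup_const_mul_of_ne_top ENNReal.ofReal_ne_top]
      exact mul_le_mul_right ((limsup_comp_le hm₁t).trans h₁) _
    have hv : limsup (fun μ => ENNReal.ofReal (ε ^ (-(d / 2))) * g₂ (m₂ μ)) l
        ≤ C * ENNReal.ofReal (ε ^ (d / 2)) := by
      rw [ENNReal.limsup_const_mul_of_ne_top ENNReal.ofReal_ne_top]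
      have step : limsup (fun μ => g₂ (m₂ μ)) l ≤ C * ENNReal.ofReal (ε ^ d) :=
        (limsup_comp_le hm₂t).trans (h₂ ε hε)
      calc ENNReal.ofReal (ε ^ (-(d / 2))) * limsup (fun μ => g₂ (m₂ μ)) l
          ≤ ENNReal.ofReal (ε ^ (-(d / 2))) * (C * ENNReal.ofReal (ε ^ d)) :=
            mul_le_mul_right step _
        _ = C * (ENNReal.ofReal (ε ^ (-(d / 2))) * ENNReal.ofReal (ε ^ d)) := by ring
        _ = C * ENNReal.ofReal (ε ^ (d / 2)) := by
            rw [← ENNReal.ofReal_mul (Real.rpow_nonneg hε.le _), ← Real.rpow_add hε,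
              show -(d / 2) + d = d / 2 by ring]
    exact limsup_le_add hpt hu hv
      (ENNReal.mul_ne_top ENNReal.ofReal_ne_top hC)
      (ENNReal.mul_ne_top hC ENNReal.ofReal_ne_top)
  -- squeeze
  have h0 : Tendsto (fun ε : ℝ => ENNReal.ofReal (ε ^ (d / 2))) l (𝓝 0) := by
    have hc : ContinuousAt (fun x : ℝ => x ^ (d / 2)) 0 :=
      Real.continuousAt_rpow_const 0 (d / 2) (Or.inr (by positivity))
    have h1 : Tendsto (fun x : ℝ => x ^ (d / 2)) l (𝓝 0) := by
      have h2 : Tendsto (fun x : ℝ => x ^ (d / 2)) l (𝓝 ((0:ℝ) ^ (d / 2))) :=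
        hc.tendsto.mono_left (nhdsWithin_le_nhds (s := Set.Ioi (0:ℝ)))
      rwa [Real.zero_rpow (by positivity : (0:ℝ) < d / 2).ne'] at h2
    have := ENNReal.tendsto_ofReal h1
    simpa using this
  have hG : Tendsto (fun ε : ℝ =>
      ENNReal.ofReal (ε ^ (d / 2)) * C + C * ENNReal.ofReal (ε ^ (d / 2))) l (𝓝 0) := by
    have hA := ENNReal.Tendsto.mul_const h0 (Or.inr hC)
    have hB := ENNReal.Tendsto.const_mul h0 (Or.inr hC)
    have := hA.add hB
    simpa using this
  refine tendsto_of_tendsto_of_tendsto_of_le_of_le' tendsto_const_nhds hG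
    (Eventually.of_forall fun _ => zero_le) ?_
  rw [hl]
  filter_upwards [self_mem_nhdsWithin] with ε (hε : 0 < ε)
  exact key ε hε
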